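/- Weak duality: Let J, I be finite sets, c ∈ ℝ^J, and for each i ∈ I let F^i : ℝ^J → ℝ^{M_i} be continuously differentiable and g_i : ℝ^{M_i} → ℝ ∪ {+∞} be proper closed convex, with (x,u) ↦ g_i(F^i(x)+u) jointly convex. Suppose x̄ ∈ ℝ^J and (ȳ, w̄) with ȳ^i ∈ ℝ^{M_i}, w̄^i ∈ ℝ^J satisfy the stationarity condition Σ_{i∈I} ∇F^i(w̄^i)ᵀ ȳ^i = c. Then c·x̄ + Σ_{i∈I} g_i(F^i(x̄)) ≥ −Σ_{i∈I} [ (∇F^i(w̄^i) w̄^i − F^i(w̄^i))·(−ȳ^i) + g_i*(−ȳ^i) ]. -/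

import Mathlib

/-!
If `g*(p) < ∞`, then `x ↦ ⟪p, F x⟫` is convex. Indeed, joint convexity of `(x, u) ↦ g (F x + u)`
says that translating by the convexity defect `e = F (a • x + b • w) - a • F x - b • F w` never
increases `g`; hence `⟪p, z⟫ - g z + ⟪p, e⟫ ≤ ⟪p, z + e⟫ - g (z + e) ≤ g*(p)` for every `z`, so
`g*(p) + ⟪p, e⟫ ≤ g*(p)`, which for finite `g*(p)` means `⟪p, e⟫ ≤ 0`.

For `p = -yⁱ`, the tangent inequality of this convex function at `wⁱ` together with the
Fenchel–Young inequality `⟪p, F x⟫ - g (F x) ≤ g*(p)` bounds the `i`-th dual term by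
`⟪yⁱ, ∇Fⁱ(wⁱ) x⟫ + gᵢ (Fⁱ x)`, and stationarity sums these inner products to `⟪c, x⟫`.
-/

open scoped RealInnerProductSpace

noncomputable section

/-- Convex conjugate of an extended-real-valued function on a real inner product space. -/
def conjFn {E : Type*} [NormedAddCommGroup E] [InnerProductSpace ℝ E]
    (g : E → EReal) (y : E) : EReal :=
  ⨆ z : E, ((⟪y, z⟫ : ℝ) : EReal) - g z

/-- A proper extended-real-valued function: somewhere finite, never `-∞`. -/
def ProperFn {E : Type*} (g : E → EReal) : Prop :=
  (∃ z, g z ≠ ⊤) ∧ ∀ z, g z ≠ ⊥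

/-- Convexity of an extended-real-valued function, via convexity of its epigraph. -/
def ConvexFn {E : Type*} [AddCommMonoid E] [Module ℝ E] (g : E → EReal) : Prop :=
  Convex ℝ {p : E × ℝ | g p.1 ≤ (p.2 : EReal)}

open Set

theorem EReal.coe_finset_sum {ι : Type*} (s : Finset ι) (f : ι → ℝ) :
    ((∑ i ∈ s, f i : ℝ) : EReal) = ∑ i ∈ s, (f i : EReal) :=
  map_sum (⟨⟨(↑), EReal.coe_zero⟩, EReal.coe_add⟩ : ℝ →+ EReal) f s

theorem EReal.neg_sum_le_sum {ι : Type*} (s : Finset ι) {a b : ι → EReal}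
    (ha : ∀ i ∈ s, a i ≠ ⊥) (hab : ∀ i ∈ s, -a i ≤ b i) :
    -(∑ i ∈ s, a i) ≤ ∑ i ∈ s, b i := by
  classical
  induction s using Finset.induction_on with
  | empty => simp
  | insert j s hj ih =>
    simp only [Finset.mem_insert, forall_eq_or_imp] at ha hab
    have hs : ∑ i ∈ s, a i ≠ ⊥ :=
      Finset.sum_induction _ (· ≠ ⊥) (fun _ _ h h' => EReal.add_ne_bot_iff.2 ⟨h, h'⟩)
        EReal.zero_ne_bot ha.2
    rw [Finset.sum_insert hj, Finset.sum_insert hj, EReal.neg_add (.inl ha.1) (.inr hs),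
      sub_eq_add_neg]
    exact add_le_add hab.1 (ih ha.2 hab.2)

theorem ConvexOn.hasFDerivAt_apply_sub_le {U : Type*} [NormedAddCommGroup U] [NormedSpace ℝ U]
    {φ : U → ℝ} {φ' : U →L[ℝ] ℝ} {w : U} (hφ : ConvexOn ℝ univ φ) (hd : HasFDerivAt φ φ' w)
    (x : U) : φ' (x - w) ≤ φ x - φ w := by
  have hline : ConvexOn ℝ univ (φ ∘ AffineMap.lineMap (k := ℝ) w x) := by
    simpa using hφ.comp_affineMap (AffineMap.lineMap (k := ℝ) w x)
  have hderiv : HasDerivAt (φ ∘ AffineMap.lineMap (k := ℝ) w x) (φ' (x - w)) 0 := by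
    refine HasFDerivAt.comp_hasDerivAt _ ?_ AffineMap.hasDerivAt_lineMap
    simpa using hd
  simpa [hderiv.deriv, slope_def_field] using
    hline.deriv_le_slope (mem_univ 0) (mem_univ 1) zero_lt_one hderiv.differentiableAt

section Conjugate

variable {E : Type*} [NormedAddCommGroup E] [InnerProductSpace ℝ E] {g : E → EReal}

theorem inner_sub_le_conjFn (p z : E) : ((⟪p, z⟫ : ℝ) : EReal) - g z ≤ conjFn g p :=
  le_iSup (fun z => ((⟪p, z⟫ : ℝ) : EReal) - g z) z

theorem conjFn_ne_bot (hg : ∃ z, g z ≠ ⊤) (p : E) : conjFn g p ≠ ⊥ := by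
  obtain ⟨z, hz⟩ := hg
  refine ne_bot_of_le_ne_bot ?_ (inner_sub_le_conjFn p z)
  rw [sub_eq_add_neg]
  exact EReal.add_ne_bot_iff.2 ⟨EReal.coe_ne_bot _, EReal.neg_eq_bot_iff.not.2 hz⟩

theorem inner_nonpos_of_conjFn_ne_top {p e : E} (hdesc : ∀ z, g (z + e) ≤ g z)
    (hg : ∃ z, g z ≠ ⊤) (hp : conjFn g p ≠ ⊤) : ⟪p, e⟫ ≤ 0 := by
  have hshift : ∀ z, ((⟪p, z⟫ : ℝ) : EReal) - g z + ⟪p, e⟫ ≤ conjFn g p := fun z =>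
    calc ((⟪p, z⟫ : ℝ) : EReal) - g z + ⟪p, e⟫ = ((⟪p, z + e⟫ : ℝ) : EReal) - g z := by
          rw [inner_add_right, EReal.coe_add, sub_eq_add_neg, sub_eq_add_neg, add_right_comm]
      _ ≤ ((⟪p, z + e⟫ : ℝ) : EReal) - g (z + e) := EReal.sub_le_sub le_rfl (hdesc z)
      _ ≤ conjFn g p := inner_sub_le_conjFn p (z + e)
  have hself : conjFn g p ≤ conjFn g p - ⟪p, e⟫ := iSup_le fun z =>
    (EReal.le_sub_iff_add_le (.inl (EReal.coe_ne_bot _)) (.inl (EReal.coe_ne_top _))).2 (hshift z)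
  obtain ⟨C, hC⟩ : ∃ C : ℝ, conjFn g p = C := ⟨_, (EReal.coe_toReal hp (conjFn_ne_bot hg p)).symm⟩
  rw [hC, ← EReal.coe_sub, EReal.coe_le_coe_iff] at hself
  linarith

end Conjugate

section Composite

variable {U E : Type*} [NormedAddCommGroup U] [InnerProductSpace ℝ U]
  [NormedAddCommGroup E] [InnerProductSpace ℝ E] {g : E → EReal} {F : U → E}

theorem ConvexFn.apply_add_defect_le (hconv : ConvexFn (fun q : U × E => g (F q.1 + q.2)))
    {a b : ℝ} (ha : 0 ≤ a) (hb : 0 ≤ b) (hab : a + b = 1) (x w : U) (z : E) :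
    g (z + (F (a • x + b • w) - a • F x - b • F w)) ≤ g z := by
  have hbound : ∀ r : ℝ, g z ≤ r → g (z + (F (a • x + b • w) - a • F x - b • F w)) ≤ r := by
    intro r hr
    have hx : ((x, z - F x), r) ∈ {q : (U × E) × ℝ | g (F q.1.1 + q.1.2) ≤ (q.2 : EReal)} := by
      simpa using hr
    have hw : ((w, z - F w), r) ∈ {q : (U × E) × ℝ | g (F q.1.1 + q.1.2) ≤ (q.2 : EReal)} := by
      simpa using hr
    have := hconv hx hw ha hb hab
    simp only [Prod.smul_mk, Prod.mk_add_mk, smul_eq_mul, mem_ofPred_eq] at this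
    convert this using 2
    · linear_combination (norm := module) (-hab) • z
    · rw [← add_mul, hab, one_mul]
  refine le_of_forall_gt_imp_ge_of_dense fun s hs => ?_
  obtain ⟨r, hzr, hrs⟩ := EReal.exists_between_coe_real hs
  exact (hbound r hzr.le).trans hrs.le

theorem convexOn_inner_comp_of_conjFn_ne_top
    (hconv : ConvexFn (fun q : U × E => g (F q.1 + q.2))) (hg : ∃ z, g z ≠ ⊤) {p : E}
    (hp : conjFn g p ≠ ⊤) : ConvexOn ℝ univ (fun x => ⟪p, F x⟫) := by
  refine ⟨convex_univ, fun x _ w _ a b ha hb hab => ?_⟩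
  have := inner_nonpos_of_conjFn_ne_top (hconv.apply_add_defect_le ha hb hab x w) hg hp
  simp only [inner_sub_right, real_inner_smul_right, smul_eq_mul] at this ⊢
  linarith

theorem neg_le_inner_add_of_convexFn (hconv : ConvexFn (fun q : U × E => g (F q.1 + q.2)))
    {w : U} (hF : DifferentiableAt ℝ F w) (x : U) (y : E) :
    -(((⟪fderiv ℝ F w w - F w, -y⟫ : ℝ) : EReal) + conjFn g (-y))
      ≤ ((⟪y, fderiv ℝ F w x⟫ : ℝ) : EReal) + g (F x) := by
  rcases eq_or_ne (conjFn g (-y)) ⊤ with hp | hp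
  · simp [hp]
  rcases eq_or_ne (g (F x)) ⊤ with hx | hx
  · simp [hx]
  have hfenchel := inner_sub_le_conjFn (g := g) (-y) (F x)
  have htangent :=
    (convexOn_inner_comp_of_conjFn_ne_top hconv ⟨F x, hx⟩ hp).hasFDerivAt_apply_sub_le
      ((innerSL ℝ (-y)).hasFDerivAt.comp w hF.hasFDerivAt) x
  obtain ⟨C, hC⟩ : ∃ C : ℝ, conjFn g (-y) = C :=
    ⟨_, (EReal.coe_toReal hp (conjFn_ne_bot ⟨F x, hx⟩ _)).symm⟩
  have hxbot : g (F x) ≠ ⊥ := fun hbot => by simp [hbot, hC] at hfenchel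
  obtain ⟨G, hG⟩ : ∃ G : ℝ, g (F x) = G := ⟨_, (EReal.coe_toReal hx hxbot).symm⟩
  rw [hC, hG] at hfenchel ⊢
  norm_cast at hfenchel ⊢
  simp only [ContinuousLinearMap.coe_comp, Function.comp_apply, innerSL_apply_apply, map_sub,
    inner_sub_left, inner_neg_left, inner_neg_right, real_inner_comm] at htangent hfenchel ⊢
  linarith

end Composite

theorem weak_duality_general {J I : Type*} [Fintype J] [Fintype I]
    (M : I → Type*) [∀ i, Fintype (M i)]
    (c : EuclideanSpace ℝ J)
    (F : ∀ i, EuclideanSpace ℝ J → EuclideanSpace ℝ (M i))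
    (g : ∀ i, EuclideanSpace ℝ (M i) → EReal)
    (hF : ∀ i, ContDiff ℝ 1 (F i))
    (hgFproper : ∀ i, ∃ x, g i (F i x) ≠ ⊤)
    (hjoint : ∀ i, ConvexFn
      (fun p : EuclideanSpace ℝ J × EuclideanSpace ℝ (M i) => g i (F i p.1 + p.2)))
    (x : EuclideanSpace ℝ J)
    (y : ∀ i, EuclideanSpace ℝ (M i)) (w : ∀ i, EuclideanSpace ℝ J)
    (hstat : ∑ i, (fderiv ℝ (F i) (w i)).adjoint (y i) = c) :
    (-(∑ i, ((((⟪(fderiv ℝ (F i) (w i)) (w i) - F i (w i), -(y i)⟫ : ℝ)) : EReal)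
          + conjFn (g i) (-(y i)))) : EReal)
      ≤ ((⟪c, x⟫ : ℝ) : EReal) + ∑ i, g i (F i x) := by
  have hlinear : ((⟪c, x⟫ : ℝ) : EReal) + ∑ i, g i (F i x)
      = ∑ i, (((⟪y i, fderiv ℝ (F i) (w i) x⟫ : ℝ) : EReal) + g i (F i x)) := by
    simp only [← hstat, sum_inner, ContinuousLinearMap.adjoint_inner_left, EReal.coe_finset_sum,
      Finset.sum_add_distrib]
  have hg_finite : ∀ i, ∃ z, g i z ≠ ⊤ := fun i => (hgFproper i).elim fun _ h => ⟨_, h⟩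
  have hterm_ne_bot : ∀ i, ((⟪fderiv ℝ (F i) (w i) (w i) - F i (w i), -(y i)⟫ : ℝ) : EReal)
      + conjFn (g i) (-(y i)) ≠ ⊥ := fun i =>
    EReal.add_ne_bot_iff.2 ⟨EReal.coe_ne_bot _, conjFn_ne_bot (hg_finite i) _⟩
  rw [hlinear]
  exact EReal.neg_sum_le_sum _ (fun i _ => hterm_ne_bot i) fun i _ =>
    neg_le_inner_add_of_convexFn (hjoint i) ((hF i).differentiable one_ne_zero (w i)) x (y i)

/-- Weak duality for the MathOpt primal-dual pair: if `(ȳ, w̄)` satisfies the stationarity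
condition `Σᵢ ∇Fⁱ(w̄ⁱ)ᵀ ȳⁱ = c`, then
`c·x̄ + Σᵢ gᵢ(Fⁱ(x̄)) ≥ −Σᵢ [(∇Fⁱ(w̄ⁱ) w̄ⁱ − Fⁱ(w̄ⁱ))·(−ȳⁱ) + gᵢ*(−ȳⁱ)]`. -/
theorem weak_duality {J I : Type*} [Fintype J] [Fintype I]
    (M : I → Type*) [∀ i, Fintype (M i)]
    (c : EuclideanSpace ℝ J)
    (F : ∀ i, EuclideanSpace ℝ J → EuclideanSpace ℝ (M i))
    (g : ∀ i, EuclideanSpace ℝ (M i) → EReal)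
    (hF : ∀ i, ContDiff ℝ 1 (F i))
    (hgproper : ∀ i, ProperFn (g i))
    (hgclosed : ∀ i, LowerSemicontinuous (g i))
    (hgconv : ∀ i, ConvexFn (g i))
    (hgFproper : ∀ i, ∃ x, g i (F i x) ≠ ⊤)
    (hjoint : ∀ i, ConvexFn
      (fun p : EuclideanSpace ℝ J × EuclideanSpace ℝ (M i) => g i (F i p.1 + p.2)))
    (x : EuclideanSpace ℝ J)
    (y : ∀ i, EuclideanSpace ℝ (M i)) (w : ∀ i, EuclideanSpace ℝ J)
    (hstat : ∑ i, (fderiv ℝ (F i) (w i)).adjoint (y i) = c) :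
    (-(∑ i, ((((⟪(fderiv ℝ (F i) (w i)) (w i) - F i (w i), -(y i)⟫ : ℝ)) : EReal)
          + conjFn (g i) (-(y i)))) : EReal)
      ≤ ((⟪c, x⟫ : ℝ) : EReal) + ∑ i, g i (F i x) :=
  weak_duality_general M c F g hF hgFproper hjoint x y w hstat
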